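/- arXiv:2601.20174 — 5 statements merged into one kernel-verified Lean document; each statement's English description precedes it below -/
import Mathlib

section
/- Let S ∈ ℝ^{n×m} have SVD S = UΣVᵀ with singular values σ₁ > σ₂ > ... > σ_k > σ_{k+1} (strict gaps). If P* ∈ ℝ^{n×k} has orthonormal columns and globally maximizes J(P) = Σ_{ℓ=1}^k ‖P_ℓᵀS‖_F², then P* = U_k D where U_k consists of the first k left singular vectors of S and D is a diagonal matrix with ±1 diagonal entries. -/
/-!
Expand the columns of `P` in the eigenbasis `u` of `S Sᵀ`: the coefficient matrix `C = Pᵀ Uᵀ`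
has orthonormal rows, so its squared entries have row sums `1` and column sums at most `1`. The
`ℓ`-th partial objective `∑_{j ≤ ℓ} p_jᵀ S Sᵀ p_j` equals `∑_i μ_i r_ℓ(i)`, where
`r_ℓ(i) = ∑_{j ≤ ℓ} C_{ji}²` lies in `[0, 1]` and has total mass `ℓ + 1`. Such a weighting is
beaten by the indicator of the first `ℓ + 1` indices (Ky Fan), with a deficit of at least
`μ_ℓ - μ_{ℓ+1}` times the mass of `r_ℓ` beyond index `ℓ`. Since `P = U_k` attains every one of
these bounds, a maximiser attains them all, and the strict gaps force each `r_ℓ` to be that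
indicator; this pins `C` down to a signed identity block.
-/

open Matrix BigOperators

/-- Nested NLSS objective: J(P) = Σ_{ℓ=1}^{k} ‖P_ℓᵀ S‖_F². -/
noncomputable def J {n m k : ℕ} (S : Matrix (Fin n) (Fin m) ℝ)
    (P : Matrix (Fin n) (Fin k) ℝ) : ℝ :=
  ∑ ℓ : Fin k, ∑ j : Fin k, if j ≤ ℓ then ∑ c : Fin m, ((Pᵀ * S) j c) ^ 2 else 0

open Finset

section Majorization

variable {ι : Type*} [Fintype ι] [DecidableEq ι] (s : Finset ι) {μ r : ι → ℝ} {a b : ℝ}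

theorem sum_mul_add_mul_sum_compl_le (hr0 : ∀ i ∉ s, 0 ≤ r i) (hr1 : ∀ i ∈ s, r i ≤ 1)
    (hsum : ∑ i, r i = #s) (ha : ∀ i ∈ s, a ≤ μ i) (hb : ∀ i ∉ s, μ i ≤ b) :
    ∑ i, μ i * r i + (a - b) * ∑ i ∈ sᶜ, r i ≤ ∑ i ∈ s, μ i := by
  have hsplit : ∑ i ∈ s, r i + ∑ i ∈ sᶜ, r i = #s := by rw [sum_add_sum_compl, hsum]
  have hin : ∑ i ∈ s, μ i * r i ≤ ∑ i ∈ s, (μ i - a * (1 - r i)) :=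
    sum_le_sum fun i hi => by nlinarith [ha i hi, hr1 i hi]
  have hout : ∑ i ∈ sᶜ, μ i * r i ≤ ∑ i ∈ sᶜ, b * r i :=
    sum_le_sum fun i hi => by
      rw [mem_compl] at hi
      exact mul_le_mul_of_nonneg_right (hb i hi) (hr0 i hi)
  rw [sum_sub_distrib, ← mul_sum, sum_sub_distrib, sum_const, nsmul_one,
    show (#s : ℝ) - ∑ i ∈ s, r i = ∑ i ∈ sᶜ, r i by linarith] at hin
  rw [← mul_sum] at hout
  rw [← sum_add_sum_compl s]
  linarith

theorem eq_ite_mem_of_sum_le_sum_mul (hr0 : ∀ i, 0 ≤ r i) (hr1 : ∀ i, r i ≤ 1)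
    (hsum : ∑ i, r i = #s) (ha : ∀ i ∈ s, a ≤ μ i) (hb : ∀ i ∉ s, μ i ≤ b)
    (hab : b < a) (hle : ∑ i ∈ s, μ i ≤ ∑ i, μ i * r i) (i : ι) :
    r i = if i ∈ s then 1 else 0 := by
  have hkey := sum_mul_add_mul_sum_compl_le s (fun i _ => hr0 i) (fun i _ => hr1 i) hsum ha hb
  have hcompl : ∑ i ∈ sᶜ, r i = 0 :=
    le_antisymm (nonpos_of_mul_nonpos_right (by linarith) (sub_pos.mpr hab))
      (sum_nonneg fun i _ => hr0 i)
  have hdeficit : ∑ i ∈ s, (1 - r i) = 0 := by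
    rw [sum_sub_distrib, sum_const, nsmul_one, ← hsum, ← sum_add_sum_compl s, hcompl]
    ring
  split_ifs with hi
  · linarith [(sum_eq_zero_iff_of_nonneg fun i _ => sub_nonneg.mpr (hr1 i)).mp hdeficit i hi]
  · exact (sum_eq_zero_iff_of_nonneg fun i _ => hr0 i).mp hcompl i (mem_compl.mpr hi)

end Majorization

section OrthonormalRows

variable {m n : Type*} [Fintype n] [DecidableEq m] {C : Matrix m n ℝ}

theorem sum_sq_row_eq_one (hC : C * Cᵀ = 1) (j : m) : ∑ i, C j i ^ 2 = 1 := by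
  simpa [mul_apply, sq] using congrFun (congrFun hC j) j

theorem sum_sq_col_le_one [Fintype m] (hC : C * Cᵀ = 1) (i : n) : ∑ j, C j i ^ 2 ≤ 1 := by
  -- `Q` is an orthogonal projection, so `Q i i = ∑ t, Q i t ^ 2 ≥ Q i i ^ 2`.
  set Q := Cᵀ * C
  have hQ : Q * Q = Q := by
    rw [Matrix.mul_assoc, ← Matrix.mul_assoc C, hC, Matrix.one_mul]
  have hdiag : Q i i = ∑ j, C j i ^ 2 := by simp [Q, mul_apply, sq]
  have hsq : Q i i = ∑ t, Q i t ^ 2 := by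
    conv_lhs => rw [← hQ, mul_apply]
    refine sum_congr rfl fun t _ => ?_
    rw [sq]
    congr 1
    simp only [Q, mul_apply, transpose_apply]
    exact sum_congr rfl fun _ _ => mul_comm _ _
  have hle : Q i i ^ 2 ≤ Q i i := hsq ▸ single_le_sum (f := fun t => Q i t ^ 2)
    (fun t _ => sq_nonneg _) (mem_univ i)
  nlinarith [hdiag ▸ sum_nonneg fun j (_ : j ∈ univ) => sq_nonneg (C j i)]

end OrthonormalRows

section PrefixColumnWeights

variable {k n : ℕ} {C : Matrix (Fin k) (Fin n) ℝ}

def prefixColSq (C : Matrix (Fin k) (Fin n) ℝ) (ℓ : Fin k) (i : Fin n) : ℝ :=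
  ∑ j ∈ Iic ℓ, C j i ^ 2

theorem prefixColSq_nonneg (ℓ : Fin k) (i : Fin n) : 0 ≤ prefixColSq C ℓ i :=
  sum_nonneg fun _ _ => sq_nonneg _

theorem prefixColSq_le_one (hC : C * Cᵀ = 1) (ℓ : Fin k) (i : Fin n) :
    prefixColSq C ℓ i ≤ 1 :=
  (sum_le_sum_of_subset_of_nonneg (subset_univ _) fun _ _ _ => sq_nonneg _).trans
    (sum_sq_col_le_one hC i)

theorem sum_prefixColSq (hkn : k ≤ n) (hC : C * Cᵀ = 1) (ℓ : Fin k) :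
    ∑ i, prefixColSq C ℓ i = #(Iic (Fin.castLE hkn ℓ)) := by
  simp only [prefixColSq]
  rw [sum_comm, sum_congr rfl fun j _ => sum_sq_row_eq_one hC j, sum_const, nsmul_one,
    Fin.card_Iic, Fin.card_Iic, Fin.val_castLE]

theorem sum_mul_prefixColSq_le {μ : Fin n → ℝ} (hkn : k ≤ n) (hC : C * Cᵀ = 1)
    (hμ : Antitone μ) (ℓ : Fin k) :
    ∑ i, μ i * prefixColSq C ℓ i ≤ ∑ i ∈ Iic (Fin.castLE hkn ℓ), μ i := by
  have h := sum_mul_add_mul_sum_compl_le (Iic (Fin.castLE hkn ℓ))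
    (fun i _ => prefixColSq_nonneg ℓ i) (fun i _ => prefixColSq_le_one hC ℓ i)
    (sum_prefixColSq hkn hC ℓ) (fun i hi => hμ (mem_Iic.mp hi))
    (fun i hi => hμ (not_le.mp (mt mem_Iic.mpr hi)).le)
  simpa using h

theorem prefixColSq_eq_ite_of_sum_le {μ : Fin n → ℝ} (hkn : k < n) (hC : C * Cᵀ = 1)
    (hμ : Antitone μ) (ℓ : Fin k)
    (hgap : μ ⟨ℓ + 1, by omega⟩ < μ (Fin.castLE hkn.le ℓ))
    (hle : ∑ i ∈ Iic (Fin.castLE hkn.le ℓ), μ i ≤ ∑ i, μ i * prefixColSq C ℓ i)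
    (i : Fin n) :
    prefixColSq C ℓ i = if i ∈ Iic (Fin.castLE hkn.le ℓ) then 1 else 0 :=
  eq_ite_mem_of_sum_le_sum_mul _ (prefixColSq_nonneg ℓ) (prefixColSq_le_one hC ℓ)
    (sum_prefixColSq hkn.le hC ℓ) (fun i hi => hμ (mem_Iic.mp hi))
    (fun i hi => hμ (Fin.le_def.mpr (by simpa [Fin.lt_def] using hi)))
    hgap hle i

theorem apply_eq_zero_of_prefixColSq_eq_ite (hkn : k ≤ n) (hC : C * Cᵀ = 1)
    (hr : ∀ ℓ i, prefixColSq C ℓ i = if i ∈ Iic (Fin.castLE hkn ℓ) then 1 else 0)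
    (j : Fin k) (i : Fin n) (hij : i ≠ Fin.castLE hkn j) : C j i = 0 := by
  rw [← sq_eq_zero_iff]
  refine le_antisymm ?_ (sq_nonneg _)
  rcases hij.lt_or_gt with hlt | hgt
  · set ℓ : Fin k := ⟨i, lt_trans hlt j.2⟩
    have hcol := sum_sq_col_le_one hC i
    rw [← sum_add_sum_compl (Iic ℓ)] at hcol
    have hhead : ∑ j' ∈ Iic ℓ, C j' i ^ 2 = 1 := by
      simpa [prefixColSq, show Fin.castLE hkn ℓ = i from rfl] using hr ℓ i
    have hj : j ∈ (Iic ℓ)ᶜ := by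
      simpa [ℓ, Fin.le_def, Fin.lt_def] using hlt
    linarith [single_le_sum (f := fun j' => C j' i ^ 2) (fun _ _ => sq_nonneg _) hj]
  · have hrow : prefixColSq C j i = 0 := by simpa [not_le.mpr hgt] using hr j i
    exact hrow ▸ single_le_sum (f := fun j' => C j' i ^ 2) (fun _ _ => sq_nonneg _)
      (mem_Iic.mpr le_rfl)

theorem prefixColSq_eq_ite_of_sum_sum_le {μ : Fin n → ℝ} (hkn : k < n) (hC : C * Cᵀ = 1)
    (hμ : Antitone μ) (hgap : ∀ i j : Fin n, (i : ℕ) < j → (j : ℕ) ≤ k → μ j < μ i)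
    (hopt : ∑ ℓ : Fin k, ∑ i ∈ Iic (Fin.castLE hkn.le ℓ), μ i ≤
      ∑ ℓ : Fin k, ∑ i, μ i * prefixColSq C ℓ i) (ℓ : Fin k) (i : Fin n) :
    prefixColSq C ℓ i = if i ∈ Iic (Fin.castLE hkn.le ℓ) then 1 else 0 := by
  have hle : ∀ ℓ ∈ univ,
      ∑ i, μ i * prefixColSq C ℓ i ≤ ∑ i ∈ Iic (Fin.castLE hkn.le ℓ), μ i :=
    fun ℓ _ => sum_mul_prefixColSq_le hkn.le hC hμ ℓ
  have heq := (sum_eq_sum_iff_of_le hle).mp (le_antisymm (sum_le_sum hle) hopt) ℓ (mem_univ ℓ)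
  exact prefixColSq_eq_ite_of_sum_le hkn hC hμ ℓ (hgap _ _ (by simp) (by simp)) heq.ge i

end PrefixColumnWeights

section Spectral

variable {ι κ : Type*} [Fintype ι] [DecidableEq ι] {u : ι → ι → ℝ} {μ : ι → ℝ}
  {A : Matrix ι ι ℝ}

theorem of_mul_transpose_eq_one (hu : ∀ i j, u i ⬝ᵥ u j = if i = j then (1 : ℝ) else 0) :
    of u * (of u)ᵀ = 1 := by
  ext i j
  simpa [mul_apply, one_apply, dotProduct] using hu i j

theorem eq_transpose_mul_diagonal_mul
    (hu : ∀ i j, u i ⬝ᵥ u j = if i = j then (1 : ℝ) else 0)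
    (heig : ∀ i, A *ᵥ u i = μ i • u i) : A = (of u)ᵀ * diagonal μ * of u := by
  have hAU : A * (of u)ᵀ = (of u)ᵀ * diagonal μ := by
    ext i j
    rw [mul_diagonal]
    simpa [mul_apply, mulVec, dotProduct, mul_comm] using congrFun (heig j) i
  rw [← hAU, Matrix.mul_assoc, mul_eq_one_comm.mp (of_mul_transpose_eq_one hu), Matrix.mul_one]

theorem transpose_mul_mul_apply_self
    (hu : ∀ i j, u i ⬝ᵥ u j = if i = j then (1 : ℝ) else 0)
    (heig : ∀ i, A *ᵥ u i = μ i • u i) (P : Matrix ι κ ℝ) (j : κ) :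
    (Pᵀ * A * P) j j = ∑ i, μ i * (Pᵀ * (of u)ᵀ) j i ^ 2 := by
  rw [eq_transpose_mul_diagonal_mul hu heig,
    show Pᵀ * ((of u)ᵀ * diagonal μ * of u) * P
      = Pᵀ * (of u)ᵀ * diagonal μ * (Pᵀ * (of u)ᵀ)ᵀ by
      simp only [transpose_mul, transpose_transpose, Matrix.mul_assoc]]
  rw [mul_apply]
  simp only [mul_diagonal, transpose_apply]
  exact sum_congr rfl fun i _ => by ring

end Spectral

section Objective

variable {n m k : ℕ} {S : Matrix (Fin n) (Fin m) ℝ} {u : Fin n → Fin n → ℝ}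
  {μ : Fin n → ℝ}

theorem J_eq_sum_sum_Iic (S : Matrix (Fin n) (Fin m) ℝ) (P : Matrix (Fin n) (Fin k) ℝ) :
    J S P = ∑ ℓ : Fin k, ∑ j ∈ Iic ℓ, (Pᵀ * (S * Sᵀ) * P) j j := by
  unfold _root_.J
  refine sum_congr rfl fun ℓ _ => ?_
  rw [← sum_filter]
  refine sum_congr (by ext; simp) fun j _ => ?_
  rw [show Pᵀ * (S * Sᵀ) * P = (Pᵀ * S) * (Pᵀ * S)ᵀ by
      simp only [transpose_mul, transpose_transpose, Matrix.mul_assoc], mul_apply]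
  simp [sq]

theorem J_eq_sum_sum_mul_prefixColSq
    (hu : ∀ i j, u i ⬝ᵥ u j = if i = j then (1 : ℝ) else 0)
    (heig : ∀ i, (S * Sᵀ) *ᵥ u i = μ i • u i) (P : Matrix (Fin n) (Fin k) ℝ) :
    J S P = ∑ ℓ : Fin k, ∑ i, μ i * prefixColSq (Pᵀ * (of u)ᵀ) ℓ i := by
  rw [J_eq_sum_sum_Iic]
  refine sum_congr rfl fun ℓ _ => ?_
  simp_rw [transpose_mul_mul_apply_self hu heig, prefixColSq, mul_sum]
  exact sum_comm

theorem prefixColSq_one_submatrix_castLE (hkn : k ≤ n) (ℓ : Fin k) (i : Fin n) :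
    prefixColSq ((1 : Matrix (Fin n) (Fin n) ℝ).submatrix (Fin.castLE hkn) id) ℓ i
      = if i ∈ Iic (Fin.castLE hkn ℓ) then 1 else 0 := by
  have h := sum_map (Iic ℓ) (Fin.castLEEmb hkn)
    fun i' => (1 : Matrix (Fin n) (Fin n) ℝ) i' i ^ 2
  rw [Fin.map_castLEEmb_Iic] at h
  simp_all [prefixColSq, one_apply]

theorem transpose_mul_self_submatrix_castLE (hkn : k ≤ n)
    (hu : ∀ i j, u i ⬝ᵥ u j = if i = j then (1 : ℝ) else 0) :
    ((of u)ᵀ.submatrix id (Fin.castLE hkn))ᵀ * (of u)ᵀ.submatrix id (Fin.castLE hkn) = 1 := by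
  rw [transpose_submatrix, transpose_transpose, ← submatrix_mul _ _ _ _ _ Function.bijective_id,
    of_mul_transpose_eq_one hu, submatrix_one _ (Fin.castLE_injective _)]

theorem J_submatrix_castLE (hkn : k ≤ n)
    (hu : ∀ i j, u i ⬝ᵥ u j = if i = j then (1 : ℝ) else 0)
    (heig : ∀ i, (S * Sᵀ) *ᵥ u i = μ i • u i) :
    J S ((of u)ᵀ.submatrix id (Fin.castLE hkn))
      = ∑ ℓ : Fin k, ∑ i ∈ Iic (Fin.castLE hkn ℓ), μ i := by
  rw [J_eq_sum_sum_mul_prefixColSq hu heig, transpose_submatrix, transpose_transpose,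
    ← submatrix_id_id ((of u)ᵀ), ← submatrix_mul _ _ _ _ _ Function.bijective_id,
    of_mul_transpose_eq_one hu]
  simp_rw [prefixColSq_one_submatrix_castLE, mul_ite, mul_one, mul_zero, sum_ite_mem, univ_inter]

end Objective

theorem stmt1 {n m k : ℕ} (hk : k < n)
    (S : Matrix (Fin n) (Fin m) ℝ)
    (u : Fin n → (Fin n → ℝ)) (μ : Fin n → ℝ)
    (hu : ∀ i j, u i ⬝ᵥ u j = if i = j then (1 : ℝ) else 0)
    (heig : ∀ i, (S * Sᵀ) *ᵥ u i = μ i • u i)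
    (hμ : Antitone μ)
    -- strict gaps σ₁ > σ₂ > ... > σ_k > σ_{k+1}, i.e. μ strictly decreasing on indices 0..k
    (hgap : ∀ i j : Fin n, (i : ℕ) < (j : ℕ) → (j : ℕ) ≤ k → μ j < μ i)
    (Pstar : Matrix (Fin n) (Fin k) ℝ)
    (hPstar : Pstarᵀ * Pstar = 1)
    (hmax : ∀ P : Matrix (Fin n) (Fin k) ℝ, Pᵀ * P = 1 → J S P ≤ J S Pstar) :
    ∃ D : Fin k → ℝ, (∀ j, D j = 1 ∨ D j = -1) ∧
      ∀ j : Fin k, Pstarᵀ j = D j • u (Fin.castLE hk.le j) := by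
  have hUtU : (of u)ᵀ * of u = 1 := mul_eq_one_comm.mp (of_mul_transpose_eq_one hu)
  set C := Pstarᵀ * (of u)ᵀ
  have hC : C * Cᵀ = 1 := by
    rw [transpose_mul, transpose_transpose, transpose_transpose, Matrix.mul_assoc,
      ← Matrix.mul_assoc (of u)ᵀ, hUtU, Matrix.one_mul, hPstar]
  have hopt := hmax _ (transpose_mul_self_submatrix_castLE hk.le hu)
  rw [J_submatrix_castLE hk.le hu heig, J_eq_sum_sum_mul_prefixColSq hu heig] at hopt
  have hzero := apply_eq_zero_of_prefixColSq_eq_ite hk.le hC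
    (prefixColSq_eq_ite_of_sum_sum_le hk hC hμ hgap hopt)
  have hPC : Pstarᵀ = C * of u := by rw [Matrix.mul_assoc, hUtU, Matrix.mul_one]
  refine ⟨fun j => C j (Fin.castLE hk.le j), fun j => ?_, fun j => ?_⟩
  · rw [← sq_eq_one_iff, ← sum_sq_row_eq_one hC j,
      sum_eq_single _ (fun i _ hi => by rw [hzero j i hi, zero_pow two_ne_zero]) (by simp)]
  · ext x
    rw [hPC, mul_apply, sum_eq_single _ (fun i _ hi => by rw [hzero j i hi, zero_mul]) (by simp)]
    rfl
end

section
/- Let A, B ∈ ℂ^{n×n} with singular values α₁ ≥ ... ≥ α_n and β₁ ≥ ... ≥ β_n respectively. Then |Tr(AB)| ≤ Σ_{i=1}^n α_i β_i (von Neumann trace inequality). -/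
/-!
Write `A = U_A D_α V_Aᴴ` and `B = U_B D_β V_Bᴴ`. Cycling the trace gives
`Tr(AB) = Tr(D_α X D_β Y) = ∑ᵢⱼ αᵢ Xᵢⱼ βⱼ Yⱼᵢ` with `X = V_Aᴴ U_B` and `Y = V_Bᴴ U_A` unitary.
By AM-GM, `|Xᵢⱼ Yⱼᵢ| ≤ Cᵢⱼ := (|Xᵢⱼ|² + |Yⱼᵢ|²) / 2`, and `C` is doubly stochastic since the
squared moduli of the entries of a unitary matrix are. By Birkhoff's theorem `C` is a convex
combination of permutation matrices, and for each permutation `σ` the rearrangement inequality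
gives `∑ᵢ αᵢ β_{σ i} ≤ ∑ᵢ αᵢ βᵢ`, because `α` and `β` are both decreasing.
-/

open Matrix

variable {n : Type*} [Fintype n] [DecidableEq n]

theorem Monovary.dotProduct_mulVec_le_of_mem_doublyStochastic {R : Type*} [Field R]
    [LinearOrder R] [IsStrictOrderedRing R] {α β : n → R} (hαβ : Monovary α β)
    {M : Matrix n n R} (hM : M ∈ doublyStochastic R n) : α ⬝ᵥ (M *ᵥ β) ≤ α ⬝ᵥ β := by
  obtain ⟨w, hw0, hw1, rfl⟩ := exists_eq_sum_perm_of_mem_doublyStochastic hM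
  calc α ⬝ᵥ ((∑ σ, w σ • σ.permMatrix R) *ᵥ β) = ∑ σ, w σ * (α ⬝ᵥ (β ∘ σ)) := by
        simp only [Matrix.sum_mulVec, smul_mulVec, permMatrix_mulVec, dotProduct_sum,
          dotProduct_smul, smul_eq_mul]
    _ ≤ ∑ σ, w σ * (α ⬝ᵥ β) := by
        gcongr with σ
        · exact hw0 σ
        · exact hαβ.sum_mul_comp_perm_le_sum_mul
    _ = α ⬝ᵥ β := by rw [← Finset.sum_mul, hw1, one_mul]

theorem trace_diagonal_mul_mul_diagonal_mul {R : Type*} [CommSemiring R] (a b : n → R)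
    (X Y : Matrix n n R) :
    trace (diagonal a * X * diagonal b * Y) = ∑ i, ∑ j, a i * X i j * b j * Y j i := by
  simp only [trace, diag_apply, mul_apply (M := diagonal a * X * diagonal b), mul_diagonal,
    diagonal_mul]

section RCLike

variable {𝕜 : Type*} [RCLike 𝕜]

theorem sum_norm_sq_row_eq_one_of_mem_unitaryGroup {U : Matrix n n 𝕜}
    (hU : U ∈ unitaryGroup n 𝕜) (i : n) : ∑ j, ‖U i j‖ ^ 2 = 1 := by
  have h : (U * Uᴴ) i i = 1 := by
    rw [← star_eq_conjTranspose, mem_unitaryGroup_iff.1 hU, one_apply_eq]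
  simp only [mul_apply, conjTranspose_apply, RCLike.star_def, RCLike.mul_conj] at h
  exact_mod_cast h

theorem map_norm_sq_mem_doublyStochastic {U : Matrix n n 𝕜} (hU : U ∈ unitaryGroup n 𝕜) :
    U.map (‖·‖ ^ 2) ∈ doublyStochastic ℝ n :=
  mem_doublyStochastic_iff_sum.2 ⟨fun _ _ => sq_nonneg _,
    sum_norm_sq_row_eq_one_of_mem_unitaryGroup hU,
    sum_norm_sq_row_eq_one_of_mem_unitaryGroup (transpose_mem_unitaryGroup_iff.2 hU)⟩

theorem norm_trace_diagonal_mul_mul_diagonal_mul_le {α β : n → ℝ} (hα : 0 ≤ α) (hβ : 0 ≤ β)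
    (X Y : Matrix n n 𝕜) :
    ‖trace (diagonal (fun i => (α i : 𝕜)) * X * diagonal (fun i => (β i : 𝕜)) * Y)‖ ≤
      α ⬝ᵥ (((1 / 2 : ℝ) • X.map (‖·‖ ^ 2) + (1 / 2 : ℝ) • (Y.map (‖·‖ ^ 2))ᵀ) *ᵥ β) := by
  rw [trace_diagonal_mul_mul_diagonal_mul]
  refine (norm_sum_le _ _).trans ?_
  simp only [dotProduct, mulVec, Finset.mul_sum]
  refine Finset.sum_le_sum fun i _ => (norm_sum_le _ _).trans <| Finset.sum_le_sum fun j _ => ?_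
  have amgm := two_mul_le_add_sq ‖X i j‖ ‖Y j i‖
  have hαβ := mul_nonneg (hα i) (hβ j)
  simp only [norm_mul, RCLike.norm_ofReal, abs_of_nonneg (hα i), abs_of_nonneg (hβ j),
    Matrix.add_apply, Matrix.smul_apply, map_apply, transpose_apply, smul_eq_mul]
  nlinarith

end RCLike

/-- von Neumann trace inequality: |Tr(AB)| ≤ Σ αᵢβᵢ for singular values in
decreasing order, given via SVDs of A and B. -/
theorem stmt4 {n : ℕ} (A B : Matrix (Fin n) (Fin n) ℂ)
    (α β : Fin n → ℝ)
    (hα : Antitone α) (hβ : Antitone β)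
    (hα0 : ∀ i, 0 ≤ α i) (hβ0 : ∀ i, 0 ≤ β i)
    (UA VA UB VB : Matrix (Fin n) (Fin n) ℂ)
    (hUA : UAᴴ * UA = 1) (hVA : VAᴴ * VA = 1)
    (hUB : UBᴴ * UB = 1) (hVB : VBᴴ * VB = 1)
    (hA : A = UA * Matrix.diagonal (fun i => (α i : ℂ)) * VAᴴ)
    (hB : B = UB * Matrix.diagonal (fun i => (β i : ℂ)) * VBᴴ) :
    ‖(A * B).trace‖ ≤ ∑ i : Fin n, α i * β i := by
  have mem {U : Matrix (Fin n) (Fin n) ℂ} (hU : Uᴴ * U = 1) : U ∈ unitaryGroup (Fin n) ℂ :=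
    mem_unitaryGroup_iff'.2 hU
  have hX : VAᴴ * UB ∈ unitaryGroup (Fin n) ℂ := mul_mem (Unitary.star_mem (mem hVA)) (mem hUB)
  have hY : VBᴴ * UA ∈ unitaryGroup (Fin n) ℂ := mul_mem (Unitary.star_mem (mem hVB)) (mem hUA)
  have hC := convex_doublyStochastic (map_norm_sq_mem_doublyStochastic hX)
    (transpose_mem_doublyStochastic_iff.2 (map_norm_sq_mem_doublyStochastic hY))
    (by norm_num : (0 : ℝ) ≤ 1 / 2) (by norm_num : (0 : ℝ) ≤ 1 / 2) (by norm_num)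
  have htrace : (A * B).trace = trace (diagonal (fun i => (α i : ℂ)) * (VAᴴ * UB) *
      diagonal (fun i => (β i : ℂ)) * (VBᴴ * UA)) := by
    rw [hA, hB, Matrix.mul_assoc UA, Matrix.mul_assoc UA, trace_mul_comm UA]
    simp only [Matrix.mul_assoc]
  calc ‖(A * B).trace‖
      ≤ α ⬝ᵥ (((1 / 2 : ℝ) • (VAᴴ * UB).map (‖·‖ ^ 2) +
          (1 / 2 : ℝ) • ((VBᴴ * UA).map (‖·‖ ^ 2))ᵀ) *ᵥ β) :=
        htrace ▸ norm_trace_diagonal_mul_mul_diagonal_mul_le hα0 hβ0 _ _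
    _ ≤ α ⬝ᵥ β := (hα.monovary hβ).dotProduct_mulVec_le_of_mem_doublyStochastic hC
end

section
/- (Eckart–Young, Frobenius norm) Let S ∈ ℝ^{n×m} with SVD S = UΣVᵀ and singular values σ₁ ≥ ... ≥ σ_{min(n,m)}. For any matrix B of rank at most k, ‖S − B‖_F² ≥ Σ_{i>k} σ_i², with equality for B = U_k Σ_k V_kᵀ (the rank-k truncated SVD). -/
/-!
Orthogonal conjugation preserves the Frobenius norm, so we may assume `S` is the rectangular
diagonal matrix `D = diag(σ)` and replace `B` by `C = Uᵀ B V`, still of rank at most `k`.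
Let `P` be the orthogonal projection onto the column space of `C` and `qⱼ = ‖P eⱼ‖²`.
Column `j` of `D` is `σⱼ eⱼ`, and its distance to the column space is at least
`σⱼ² (1 - qⱼ)`. The weights satisfy `0 ≤ qⱼ ≤ 1` and `∑ qⱼ = tr P = rank C ≤ k`; as `σ` is
decreasing, the total `∑ σⱼ² (1 - qⱼ)` is smallest when the mass of `q` sits on the first `k`
indices, which gives `∑_{j ≥ k} σⱼ²`. Truncating `D` after `k` entries attains this value.
-/

open Matrix BigOperators

def frobSq {a b : ℕ} (M : Matrix (Fin a) (Fin b) ℝ) : ℝ :=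
  ∑ i : Fin a, ∑ j : Fin b, M i j ^ 2

open Finset

section Projection

variable {E : Type*} [NormedAddCommGroup E] [InnerProductSpace ℝ E]

theorem Submodule.sum_norm_sq_starProjection_eq_finrank {ι : Type*} [Fintype ι]
    [FiniteDimensional ℝ E] (K : Submodule ℝ E) (b : OrthonormalBasis ι ℝ E) :
    ∑ i, ‖K.starProjection (b i)‖ ^ 2 = Module.finrank ℝ K := by
  have hP : LinearMap.IsProj K (K.starProjection : E →ₗ[ℝ] E) :=
    ⟨K.starProjection_apply_mem, fun _ => K.starProjection_eq_self_iff.mpr⟩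
  rw [← hP.trace, LinearMap.trace_eq_sum_inner _ b]
  refine sum_congr rfl fun i _ => ?_
  simpa [real_inner_comm] using (K.re_inner_starProjection_eq_normSq (b i)).symm

theorem Submodule.norm_sub_sq_eq_starProjection_add_of_mem (K : Submodule ℝ E)
    [K.HasOrthogonalProjection] (x : E) {y : E} (hy : y ∈ K) :
    ‖x - y‖ ^ 2 = ‖x - K.starProjection x‖ ^ 2 + ‖K.starProjection x - y‖ ^ 2 := by
  have h := norm_add_sq_eq_norm_sq_add_norm_sq_of_inner_eq_zero _ _
    (K.starProjection_inner_eq_zero x _ (K.sub_mem (K.starProjection_apply_mem x) hy))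
  rw [sub_add_sub_cancel] at h
  simpa only [sq] using h

theorem Submodule.norm_sq_sub_norm_sq_starProjection_le (K : Submodule ℝ E)
    [K.HasOrthogonalProjection] (x : E) {y : E} (hy : y ∈ K) :
    ‖x‖ ^ 2 - ‖K.starProjection x‖ ^ 2 ≤ ‖x - y‖ ^ 2 := by
  have hx := K.norm_sub_sq_eq_starProjection_add_of_mem x K.zero_mem
  rw [sub_zero, sub_zero] at hx
  rw [K.norm_sub_sq_eq_starProjection_add_of_mem x hy, hx]
  linarith [sq_nonneg ‖K.starProjection x - y‖]

end Projection

theorem sum_Ico_le_sum_range_mul_one_sub {a q : ℕ → ℝ} {k r : ℕ} (ha : Antitone a)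
    (hak : 0 ≤ a k) (hq0 : ∀ i, 0 ≤ q i) (hq1 : ∀ i, q i ≤ 1)
    (hq : ∑ i ∈ range r, q i ≤ k) :
    ∑ i ∈ Ico k r, a i ≤ ∑ i ∈ range r, a i * (1 - q i) := by
  rcases le_total r k with hrk | hkr
  · rw [Ico_eq_empty_of_le hrk, sum_empty]
    exact sum_nonneg fun i hi =>
      mul_nonneg (hak.trans (ha (by grind))) (sub_nonneg.mpr (hq1 i))
  have head : ∑ i ∈ range k, a k * (1 - q i) ≤ ∑ i ∈ range k, a i * (1 - q i) :=
    sum_le_sum fun i hi =>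
      mul_le_mul_of_nonneg_right (ha (mem_range.mp hi).le) (sub_nonneg.mpr (hq1 i))
  have tail : ∑ i ∈ Ico k r, a i * q i ≤ ∑ i ∈ Ico k r, a k * q i :=
    sum_le_sum fun i hi => mul_le_mul_of_nonneg_right (ha (mem_Ico.mp hi).1) (hq0 i)
  have slack : 0 ≤ a k * (k - ∑ i ∈ range r, q i) := mul_nonneg hak (sub_nonneg.mpr hq)
  rw [← sum_range_add_sum_Ico _ hkr] at slack ⊢
  simp only [mul_sub, mul_one, sum_sub_distrib, ← mul_sum, sum_const, card_range,
    nsmul_eq_mul] at head tail slack ⊢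
  linarith

theorem frobSq_eq_trace {a b : ℕ} (M : Matrix (Fin a) (Fin b) ℝ) :
    frobSq M = trace (Mᵀ * M) := by
  simp only [frobSq, trace, diag_apply, mul_apply, transpose_apply, sq]
  exact sum_comm

theorem frobSq_mul_of_transpose_mul_eq_one {a a' b : ℕ} {U : Matrix (Fin a') (Fin a) ℝ}
    (hU : Uᵀ * U = 1) (M : Matrix (Fin a) (Fin b) ℝ) : frobSq (U * M) = frobSq M := by
  rw [frobSq_eq_trace, frobSq_eq_trace, transpose_mul, Matrix.mul_assoc,
    ← Matrix.mul_assoc Uᵀ, hU, Matrix.one_mul]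

theorem frobSq_mul_transpose_of_transpose_mul_eq_one {a b b' : ℕ}
    {V : Matrix (Fin b') (Fin b) ℝ} (hV : Vᵀ * V = 1) (M : Matrix (Fin a) (Fin b) ℝ) :
    frobSq (M * Vᵀ) = frobSq M := by
  rw [frobSq_eq_trace, frobSq_eq_trace, transpose_mul, transpose_transpose, Matrix.mul_assoc,
    trace_mul_comm V, Matrix.mul_assoc, Matrix.mul_assoc, hV, Matrix.mul_one]

theorem frobSq_eq_sum_norm_sq_col {a b : ℕ} (M : Matrix (Fin a) (Fin b) ℝ) :
    frobSq M = ∑ j, ‖WithLp.toLp 2 (Mᵀ j)‖ ^ 2 := by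
  simp only [frobSq, EuclideanSpace.real_norm_sq_eq, transpose_apply]
  exact sum_comm

theorem finrank_span_toLp_cols {a b : ℕ} (C : Matrix (Fin a) (Fin b) ℝ) :
    Module.finrank ℝ (Submodule.span ℝ (Set.range fun j => WithLp.toLp 2 (Cᵀ j))) =
      C.rank := by
  rw [rank_eq_finrank_span_cols,
    ← LinearEquiv.finrank_map_eq (WithLp.linearEquiv 2 ℝ (Fin a → ℝ)), Submodule.map_span,
    ← Set.range_comp]
  rfl

def rectDiag (n m : ℕ) (τ : ℕ → ℝ) : Matrix (Fin n) (Fin m) ℝ :=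
  of fun i j => if (i : ℕ) = j then τ i else 0

theorem frobSq_rectDiag (n m : ℕ) (τ : ℕ → ℝ) :
    frobSq (rectDiag n m τ) = ∑ i ∈ range (min n m), τ i ^ 2 := by
  have row : ∀ i : ℕ, ∑ j : Fin m, (if i = j then τ i else 0) ^ 2 =
      if i < m then τ i ^ 2 else 0 := by
    intro i
    rw [Fin.sum_univ_eq_sum_range (fun j => (if i = j then τ i else 0) ^ 2)]
    simp [ite_pow]
  simp only [frobSq, rectDiag, of_apply, row]
  rw [Fin.sum_univ_eq_sum_range (fun i => if i < m then τ i ^ 2 else 0), ← sum_filter,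
    range_eq_Ico, Ico_filter_lt, ← range_eq_Ico]

theorem frobSq_rectDiag_sub_truncation (n m k : ℕ) (σ : ℕ → ℝ) :
    frobSq (rectDiag n m σ - of fun (i : Fin n) (j : Fin m) =>
        if (i : ℕ) = j ∧ (i : ℕ) < k then σ i else 0) =
      ∑ i ∈ Ico k (min n m), σ i ^ 2 := by
  have htail : rectDiag n m σ - (of fun (i : Fin n) (j : Fin m) =>
        if (i : ℕ) = j ∧ (i : ℕ) < k then σ i else 0) =
      rectDiag n m fun i => if k ≤ i then σ i else 0 := by
    ext i j
    simp only [rectDiag, Matrix.sub_apply, of_apply]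
    split_ifs <;> grind
  rw [htail, frobSq_rectDiag]
  simp only [ite_pow, ne_eq, OfNat.ofNat_ne_zero, not_false_eq_true, zero_pow]
  rw [← sum_filter, range_eq_Ico, Ico_filter_le, max_eq_right (Nat.zero_le k)]

/-- Zero when `n ≤ j`. -/
def unitVec (n j : ℕ) : EuclideanSpace ℝ (Fin n) :=
  WithLp.toLp 2 fun i => if (i : ℕ) = j then 1 else 0

theorem unitVec_of_lt {n j : ℕ} (h : j < n) :
    unitVec n j = EuclideanSpace.basisFun (Fin n) ℝ ⟨j, h⟩ := by
  ext i
  simp [unitVec, Fin.ext_iff]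

theorem norm_unitVec_le (n j : ℕ) : ‖unitVec n j‖ ≤ 1 := by
  rcases lt_or_ge j n with h | h
  · simp [unitVec_of_lt h]
  · have h0 : unitVec n j = 0 := by
      ext i
      simp only [unitVec, PiLp.zero_apply, ite_eq_right_iff]
      omega
    simp [h0]

theorem toLp_col_rectDiag_sub {n m : ℕ} (σ : ℕ → ℝ) (C : Matrix (Fin n) (Fin m) ℝ)
    (j : Fin m) :
    WithLp.toLp 2 ((rectDiag n m σ - C)ᵀ j) = σ j • unitVec n j - WithLp.toLp 2 (Cᵀ j) := by
  ext i
  by_cases h : (i : ℕ) = j <;> simp [rectDiag, unitVec, h]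

theorem sum_Ico_sq_le_frobSq_rectDiag_sub {n m k : ℕ} {σ : ℕ → ℝ} (hσ : Antitone σ)
    (hσ0 : ∀ i, 0 ≤ σ i) (C : Matrix (Fin n) (Fin m) ℝ) (hC : C.rank ≤ k) :
    ∑ i ∈ Ico k (min n m), σ i ^ 2 ≤ frobSq (rectDiag n m σ - C) := by
  set K := Submodule.span ℝ (Set.range fun j => WithLp.toLp 2 (Cᵀ j))
  set q : ℕ → ℝ := fun j => ‖K.starProjection (unitVec n j)‖ ^ 2
  have hq : ∀ j, q j ≤ ‖unitVec n j‖ ^ 2 := fun j =>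
    pow_le_pow_left₀ (norm_nonneg _) (K.norm_starProjection_apply_le _) 2
  have hq1 : ∀ j, q j ≤ 1 := fun j =>
    (hq j).trans (pow_le_one₀ (norm_nonneg _) (norm_unitVec_le n j))
  have hcol : ∀ j : Fin m, σ j ^ 2 * (‖unitVec n j‖ ^ 2 - q j) ≤
      ‖WithLp.toLp 2 ((rectDiag n m σ - C)ᵀ j)‖ ^ 2 := by
    intro j
    rw [toLp_col_rectDiag_sub]
    convert K.norm_sq_sub_norm_sq_starProjection_le (σ j • unitVec n j)
      (Submodule.subset_span (Set.mem_range_self j)) using 1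
    rw [map_smul, norm_smul, norm_smul, mul_pow, mul_pow, Real.norm_eq_abs, sq_abs]
    ring
  have htrace : ∑ j ∈ range n, q j ≤ k := by
    rw [← Fin.sum_univ_eq_sum_range]
    simp only [q, unitVec_of_lt (Fin.is_lt _), Fin.eta]
    rw [K.sum_norm_sq_starProjection_eq_finrank, finrank_span_toLp_cols]
    exact_mod_cast hC
  calc ∑ i ∈ Ico k (min n m), σ i ^ 2
      ≤ ∑ j ∈ range (min n m), σ j ^ 2 * (1 - q j) :=
        sum_Ico_le_sum_range_mul_one_sub (fun i j hij => pow_le_pow_left₀ (hσ0 j) (hσ hij) 2)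
          (sq_nonneg _) (fun j => sq_nonneg _) hq1
          ((sum_le_sum_of_subset_of_nonneg (range_subset_range.mpr (min_le_left n m))
            fun j _ _ => sq_nonneg _).trans htrace)
    _ = ∑ j ∈ range (min n m), σ j ^ 2 * (‖unitVec n j‖ ^ 2 - q j) := by
        refine sum_congr rfl fun j hj => ?_
        rw [unitVec_of_lt (lt_min_iff.mp (mem_range.mp hj)).1]
        simp
    _ ≤ ∑ j ∈ range m, σ j ^ 2 * (‖unitVec n j‖ ^ 2 - q j) :=
        sum_le_sum_of_subset_of_nonneg (range_subset_range.mpr (min_le_right n m))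
          fun j _ _ => mul_nonneg (sq_nonneg _) (sub_nonneg.mpr (hq j))
    _ = ∑ j : Fin m, σ j ^ 2 * (‖unitVec n j‖ ^ 2 - q j) :=
        (Fin.sum_univ_eq_sum_range (fun j => σ j ^ 2 * (‖unitVec n j‖ ^ 2 - q j)) m).symm
    _ ≤ frobSq (rectDiag n m σ - C) := by
        rw [frobSq_eq_sum_norm_sq_col]
        exact sum_le_sum fun j _ => hcol j

theorem stmt10_general {n m k : ℕ}
    (S : Matrix (Fin n) (Fin m) ℝ)
    (U : Matrix (Fin n) (Fin n) ℝ) (V : Matrix (Fin m) (Fin m) ℝ)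
    (σ : ℕ → ℝ) (hσ : Antitone σ) (hσ0 : ∀ i, 0 ≤ σ i)
    (hU : Uᵀ * U = 1)
    (hV : Vᵀ * V = 1)
    (hS : S = U * (Matrix.of fun (i : Fin n) (j : Fin m) => if (i : ℕ) = (j : ℕ) then σ (i : ℕ) else 0) * Vᵀ) :
    (∀ B : Matrix (Fin n) (Fin m) ℝ, B.rank ≤ k →
        (∑ i ∈ Finset.Ico k (min n m), σ i ^ 2) ≤ frobSq (S - B)) ∧
    frobSq (S - U * (Matrix.of fun (i : Fin n) (j : Fin m) =>
        if (i : ℕ) = (j : ℕ) ∧ (i : ℕ) < k then σ (i : ℕ) else 0) * Vᵀ) =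
      ∑ i ∈ Finset.Ico k (min n m), σ i ^ 2 := by
  have hconj : ∀ M : Matrix (Fin n) (Fin m) ℝ, frobSq (U * M * Vᵀ) = frobSq M := fun M => by
    rw [frobSq_mul_transpose_of_transpose_mul_eq_one hV, frobSq_mul_of_transpose_mul_eq_one hU]
  change S = U * rectDiag n m σ * Vᵀ at hS
  subst hS
  refine ⟨fun B hB => ?_, ?_⟩
  · have hB' : B = U * (Uᵀ * B * V) * Vᵀ := by
      simp only [← Matrix.mul_assoc, mul_eq_one_comm.mp hU, Matrix.one_mul]
      rw [Matrix.mul_assoc, mul_eq_one_comm.mp hV, Matrix.mul_one]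
    rw [hB', ← Matrix.sub_mul, ← Matrix.mul_sub, hconj]
    exact sum_Ico_sq_le_frobSq_rectDiag_sub hσ hσ0 _
      ((rank_mul_le_left _ _).trans ((rank_mul_le_right _ _).trans hB))
  · rw [← Matrix.sub_mul, ← Matrix.mul_sub, hconj]
    exact frobSq_rectDiag_sub_truncation n m k σ

/-- Eckart–Young theorem (Frobenius norm). -/
theorem stmt10 {n m k : ℕ}
    (S : Matrix (Fin n) (Fin m) ℝ)
    (U : Matrix (Fin n) (Fin n) ℝ) (V : Matrix (Fin m) (Fin m) ℝ)
    (σ : ℕ → ℝ) (hσ : Antitone σ) (hσ0 : ∀ i, 0 ≤ σ i)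
    (hσz : ∀ i, min n m ≤ i → σ i = 0)
    (hU : Uᵀ * U = 1) (hU' : U * Uᵀ = 1)
    (hV : Vᵀ * V = 1) (hV' : V * Vᵀ = 1)
    (hS : S = U * (Matrix.of fun (i : Fin n) (j : Fin m) => if (i : ℕ) = (j : ℕ) then σ (i : ℕ) else 0) * Vᵀ) :
    (∀ B : Matrix (Fin n) (Fin m) ℝ, B.rank ≤ k →
        (∑ i ∈ Finset.Ico k (min n m), σ i ^ 2) ≤ frobSq (S - B)) ∧
    frobSq (S - U * (Matrix.of fun (i : Fin n) (j : Fin m) =>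
        if (i : ℕ) = (j : ℕ) ∧ (i : ℕ) < k then σ (i : ℕ) else 0) * Vᵀ) =
      ∑ i ∈ Finset.Ico k (min n m), σ i ^ 2 :=
  stmt10_general S U V σ hσ hσ0 hU hV hS
end

section
/- Let A be a symmetric n×n matrix with eigenvalues λ₁ > λ₂ > ... > λ_k > λ_{k+1} ≥ ... (the top k eigenvalues simple and separated from the rest), with orthonormal eigenvectors u₁, ..., u_k. If B = Σ_{j=1}^k w_j p_j p_jᵀ with strictly decreasing positive weights w_j, orthonormal p_j, and Tr(AB) = Σ_{j=1}^k w_j λ_j, then p_j = ± u_j for each j = 1,...,k. -/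
/-!
Write `d j i = (p j ⬝ᵥ u i)²`. By Parseval and Bessel, `d` has unit row sums and column sums at
most one, and `Tr(AB) = ∑ⱼ wⱼ ∑ᵢ λᵢ d j i`. For `m ≤ k`, the sum `s` of the first `m` rows of `d`
satisfies `0 ≤ s ≤ 1` and has total mass `m`, so by the bathtub principle
`∑ᵢ λᵢ sᵢ ≤ λ₁ + ⋯ + λₘ`; thanks to the eigenvalue gap, equality forces `s` to be the indicator of
the first `m` indices. Summation by parts writes `Tr(AB) - ∑ⱼ wⱼ λⱼ` as a combination of these
prefix defects with the positive coefficients `wⱼ - wⱼ₊₁` and `w_k`, so every defect vanishes.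
Hence the first `k` rows of `d` are those of the identity matrix, i.e. `p j = ± u j`.
-/

open Matrix BigOperators Finset

section Orthonormal

variable {R ι : Type*} [CommRing R] [Fintype ι] [DecidableEq ι] {u : ι → ι → R}

theorem sum_dotProduct_smul_eq_self (hu : ∀ i j, u i ⬝ᵥ u j = if i = j then 1 else 0)
    (v : ι → R) : ∑ i, (v ⬝ᵥ u i) • u i = v := by
  have hUUt : of u * (of u)ᵀ = 1 := by
    ext i j
    simpa [mul_apply, one_apply, dotProduct] using hu i j
  have hUtU : (of u)ᵀ * of u = 1 := mul_eq_one_comm.mp hUUt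
  calc ∑ i, (v ⬝ᵥ u i) • u i = (v ᵥ* (of u)ᵀ) ᵥ* of u := by
        ext t; simp [vecMul, dotProduct, Finset.sum_apply, mul_comm]
    _ = v := by rw [vecMul_vecMul, hUtU, vecMul_one]

theorem dotProduct_mulVec_eq_sum_mul_sq (hu : ∀ i j, u i ⬝ᵥ u j = if i = j then 1 else 0)
    {A : Matrix ι ι R} {lam : ι → R} (heig : ∀ i, A *ᵥ u i = lam i • u i) (v : ι → R) :
    v ⬝ᵥ A *ᵥ v = ∑ i, lam i * (v ⬝ᵥ u i) ^ 2 := by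
  nth_rewrite 2 [← sum_dotProduct_smul_eq_self hu v]
  simp only [mulVec_sum, mulVec_smul, heig, dotProduct_sum, dotProduct_smul, smul_eq_mul]
  exact sum_congr rfl fun i _ => by ring

theorem dotProduct_self_eq_sum_sq (hu : ∀ i j, u i ⬝ᵥ u j = if i = j then 1 else 0)
    (v : ι → R) : v ⬝ᵥ v = ∑ i, (v ⬝ᵥ u i) ^ 2 := by
  simpa using dotProduct_mulVec_eq_sum_mul_sq hu (A := 1) (lam := 1) (by simp) v

theorem eq_or_eq_neg_of_sq_dotProduct_eq_ite [NoZeroDivisors R]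
    (hu : ∀ i j, u i ⬝ᵥ u j = if i = j then 1 else 0) {v : ι → R} {i₀ : ι}
    (hv : ∀ i, (v ⬝ᵥ u i) ^ 2 = if i = i₀ then 1 else 0) : v = u i₀ ∨ v = -u i₀ := by
  have hv0 : ∀ i ≠ i₀, v ⬝ᵥ u i = 0 := fun i hi => pow_eq_zero_iff two_ne_zero |>.1 <| by
    simpa [hi] using hv i
  have hexp : v = (v ⬝ᵥ u i₀) • u i₀ := by
    conv_lhs => rw [← sum_dotProduct_smul_eq_self hu v]
    exact sum_eq_single i₀ (fun i _ hi => by rw [hv0 i hi, zero_smul]) (by simp)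
  rcases mul_self_eq_one_iff.1 (by simpa [sq] using hv i₀) with h | h
  · left; rw [hexp, h, one_smul]
  · right; rw [hexp, h, neg_one_smul]

end Orthonormal

theorem sum_sq_dotProduct_le {ι κ : Type*} [Fintype ι] [Fintype κ] [DecidableEq κ]
    {p : κ → ι → ℝ} (hp : ∀ i j, p i ⬝ᵥ p j = if i = j then 1 else 0) (x : ι → ℝ) :
    ∑ j, (x ⬝ᵥ p j) ^ 2 ≤ x ⬝ᵥ x := by
  have hon : Orthonormal ℝ fun j => (WithLp.toLp 2 (p j) : EuclideanSpace ℝ ι) := by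
    rw [orthonormal_iff_ite]; intro i j
    simp [EuclideanSpace.inner_toLp_toLp, hp, eq_comm]
  have h := hon.sum_inner_products_le (WithLp.toLp 2 x : EuclideanSpace ℝ ι) (s := univ)
  rw [← real_inner_self_eq_norm_sq] at h
  simpa only [EuclideanSpace.inner_toLp_toLp, Real.norm_eq_abs, sq_abs, star_trivial] using h

theorem trace_mul_sum_smul_vecMulVec {R ι κ : Type*} [CommRing R] [Fintype ι] [Fintype κ]
    (A : Matrix ι ι R) (w : κ → R) (p : κ → ι → R) :
    (A * ∑ j, w j • vecMulVec (p j) (p j)).trace = ∑ j, w j * (p j ⬝ᵥ A *ᵥ p j) := by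
  simp [Matrix.mul_sum, trace_sum, mul_vecMulVec, dotProduct_comm]

section Bathtub

variable {ι : Type*} [DecidableEq ι] (T : Finset ι) {lam s : ι → ℝ} {c : ℝ}

theorem sum_sub_sum_mul_eq_sum_ite [Fintype ι] (lam : ι → ℝ) (c : ℝ) (hs : ∑ i, s i = #T) :
    ∑ i ∈ T, lam i - ∑ i, lam i * s i =
      ∑ i, if i ∈ T then (lam i - c) * (1 - s i) else (c - lam i) * s i := by
  have hterm : ∀ i, (if i ∈ T then (lam i - c) * (1 - s i) else (c - lam i) * s i) =
      (if i ∈ T then lam i else 0) - lam i * s i + c * (s i - if i ∈ T then 1 else 0) := by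
    intro i; split_ifs <;> ring
  simp only [hterm, sum_add_distrib, sum_sub_distrib, ← mul_sum, sum_ite_mem, univ_inter, hs]
  simp

theorem ite_threshold_nonneg (hT : ∀ i ∈ T, c ≤ lam i) (hTc : ∀ i ∉ T, lam i ≤ c)
    (hs0 : ∀ i, 0 ≤ s i) (hs1 : ∀ i, s i ≤ 1) (i : ι) :
    0 ≤ if i ∈ T then (lam i - c) * (1 - s i) else (c - lam i) * s i := by
  split_ifs with hi
  · exact mul_nonneg (sub_nonneg.2 (hT i hi)) (sub_nonneg.2 (hs1 i))
  · exact mul_nonneg (sub_nonneg.2 (hTc i hi)) (hs0 i)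

theorem sum_mul_le_sum_of_le_of_le [Fintype ι] (hT : ∀ i ∈ T, c ≤ lam i)
    (hTc : ∀ i ∉ T, lam i ≤ c)
    (hs0 : ∀ i, 0 ≤ s i) (hs1 : ∀ i, s i ≤ 1) (hs : ∑ i, s i = #T) :
    ∑ i, lam i * s i ≤ ∑ i ∈ T, lam i := by
  have := sum_sub_sum_mul_eq_sum_ite T lam c hs
  have := sum_nonneg fun i (_ : i ∈ univ) => ite_threshold_nonneg T hT hTc hs0 hs1 i
  linarith

theorem eq_ite_of_sum_mul_eq_sum [Fintype ι] (hT : ∀ i ∈ T, c < lam i)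
    (hTc : ∀ i ∉ T, lam i ≤ c) (hs0 : ∀ i, 0 ≤ s i) (hs1 : ∀ i, s i ≤ 1) (hs : ∑ i, s i = #T)
    (heq : ∑ i, lam i * s i = ∑ i ∈ T, lam i) (i : ι) :
    s i = if i ∈ T then 1 else 0 := by
  have hnonneg := ite_threshold_nonneg T (fun i hi => (hT i hi).le) hTc hs0 hs1
  have hzero := (sum_eq_zero_iff_of_nonneg fun i _ => hnonneg i).1
    (by rw [← sum_sub_sum_mul_eq_sum_ite T lam c hs, heq, sub_self])
  have hsT : ∀ i ∈ T, s i = 1 := fun i hi => by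
    have := hzero i (mem_univ i)
    rw [if_pos hi, mul_eq_zero, sub_eq_zero, sub_eq_zero] at this
    exact this.resolve_left (hT i hi).ne' |>.symm
  split_ifs with hi
  · exact hsT i hi
  · have hTc0 : ∑ i ∈ Tᶜ, s i = 0 := by
      have := sum_add_sum_compl T s
      rw [sum_congr rfl hsT, hs] at this
      simpa using this
    exact (sum_eq_zero_iff_of_nonneg fun i _ => hs0 i).1 hTc0 i (mem_compl.2 hi)

theorem exists_threshold_of_forall_lt [Fintype ι] {T : Finset ι}
    (hsep : ∀ i ∈ T, ∀ j ∉ T, lam j < lam i) :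
    ∃ c, (∀ i ∈ T, c < lam i) ∧ ∀ j ∉ T, lam j ≤ c := by
  by_cases hTc : Tᶜ.Nonempty
  · refine ⟨Tᶜ.sup' hTc lam, fun i hi => (sup'_lt_iff hTc).2 fun j hj => ?_,
      fun j hj => le_sup' lam (mem_compl.2 hj)⟩
    exact hsep i hi j (mem_compl.1 hj)
  · obtain ⟨b, hb⟩ := (Set.finite_range lam).bddBelow
    refine ⟨b - 1, fun i _ => ?_, fun j hj => absurd ⟨j, mem_compl.2 hj⟩ hTc⟩
    linarith [hb (Set.mem_range_self i)]

end Bathtub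

theorem sum_range_eq_zero_of_sum_mul_eq_zero {k : ℕ} {w x : ℕ → ℝ}
    (hw : ∀ j, j + 1 < k → w (j + 1) < w j) (hw0 : ∀ j < k, 0 < w j)
    (hP : ∀ m ≤ k, ∑ j ∈ range m, x j ≤ 0) (h : ∑ j ∈ range k, w j * x j = 0)
    {m : ℕ} (hm : m ≤ k) : ∑ j ∈ range m, x j = 0 := by
  rcases Nat.eq_zero_or_pos m with rfl | hm0
  · simp
  have hparts := sum_range_by_parts w x k
  simp only [smul_eq_mul] at hparts
  rw [hparts] at h
  have hlast : w (k - 1) * ∑ j ∈ range k, x j ≤ 0 :=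
    mul_nonpos_of_nonneg_of_nonpos (hw0 _ (by omega)).le (hP k le_rfl)
  have hterm : ∀ i ∈ range (k - 1), 0 ≤ (w (i + 1) - w i) * ∑ j ∈ range (i + 1), x j :=
    fun i hi => mul_nonneg_of_nonpos_of_nonpos
      (sub_nonpos.2 (hw i (by simp at hi; omega)).le) (hP _ (by simp at hi; omega))
  have hsum := sum_nonneg hterm
  rcases hm.eq_or_lt with rfl | hmk
  · have := (mul_eq_zero.1 (by linarith : w (m - 1) * ∑ j ∈ range m, x j = 0))
    exact this.resolve_left (hw0 _ (by omega)).ne'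
  · obtain ⟨i, rfl⟩ : ∃ i, m = i + 1 := ⟨m - 1, by omega⟩
    have := (sum_eq_zero_iff_of_nonneg hterm).1 (by linarith) i (by simp; omega)
    exact (mul_eq_zero.1 this).resolve_left (sub_ne_zero.2 (hw i (by omega)).ne)

theorem Fin.sum_filter_val_lt_eq_sum_range {M : Type*} [AddCommMonoid M] {k m : ℕ} (hm : m ≤ k)
    (f : ℕ → M) : ∑ j : Fin k with j.val < m, f j = ∑ t ∈ range m, f t := by
  rw [sum_filter, Fin.sum_univ_eq_sum_range (fun t => if t < m then f t else 0), ← sum_filter]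
  congr 1
  ext t
  simp only [mem_filter, mem_range]
  omega

theorem Fin.sum_filter_val_lt_succ {M : Type*} [AddCommMonoid M] {k : ℕ} (f : Fin k → M)
    (j : Fin k) :
    ∑ i : Fin k with i.val < j.val + 1, f i = f j + ∑ i : Fin k with i.val < j.val, f i := by
  have : univ.filter (fun i : Fin k => i.val < j.val + 1) =
      insert j (univ.filter fun i : Fin k => i.val < j.val) := by
    ext i; simp [Fin.ext_iff]; omega
  rw [this, sum_insert (by simp)]

theorem Fin.sum_filter_val_lt_castLE {M : Type*} [AddCommMonoid M] {k n m : ℕ} (hk : k ≤ n)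
    (hm : m ≤ k) (f : Fin n → M) :
    ∑ j : Fin k with j.val < m, f (Fin.castLE hk j) = ∑ i : Fin n with i.val < m, f i := by
  refine sum_nbij (Fin.castLE hk) (by simp) (fun _ _ _ _ h => Fin.castLE_injective hk h)
    (fun i hi => ?_) (fun _ _ => rfl)
  simp only [coe_filter, mem_univ, true_and, Set.mem_ofPred_eq] at hi
  exact ⟨⟨i, by omega⟩, by simpa using hi, rfl⟩

theorem Fin.sum_filter_val_lt_eq_zero_of_sum_mul_eq_zero {k : ℕ} {w x : Fin k → ℝ}
    (hw : StrictAnti w) (hw0 : ∀ j, 0 < w j)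
    (hP : ∀ m ≤ k, ∑ j : Fin k with j.val < m, x j ≤ 0) (h : ∑ j, w j * x j = 0)
    {m : ℕ} (hm : m ≤ k) : ∑ j : Fin k with j.val < m, x j = 0 := by
  let extend (f : Fin k → ℝ) (t : ℕ) : ℝ := if ht : t < k then f ⟨t, ht⟩ else 0
  have hextend (f : Fin k → ℝ) (j : Fin k) : extend f j = f j := by simp [extend]
  have hprefix (m : ℕ) (hm : m ≤ k) :
      ∑ j : Fin k with j.val < m, x j = ∑ t ∈ range m, extend x t := by
    simp only [← Fin.sum_filter_val_lt_eq_sum_range hm, hextend]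
  rw [hprefix m hm]
  refine sum_range_eq_zero_of_sum_mul_eq_zero (w := extend w) (fun j hj => ?_) (fun j hj => ?_)
    (fun m hm => hprefix m hm ▸ hP m hm) ?_ hm
  · simpa [extend, hj, (Nat.lt_succ_self j).trans hj]
      using hw (Fin.mk_lt_mk.2 (Nat.lt_succ_self j))
  · simpa [extend, hj] using hw0 ⟨j, hj⟩
  · simpa [← Fin.sum_univ_eq_sum_range, hextend] using h

section Prefix

variable {n k : ℕ} {lam : Fin n → ℝ} {d : Fin k → Fin n → ℝ} {m : ℕ}

theorem exists_threshold_filter_val_lt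
    (hgap : ∀ i j : Fin n, (i : ℕ) < (j : ℕ) → (i : ℕ) < k → lam j < lam i) (hm : m ≤ k) :
    ∃ c, (∀ i ∈ univ.filter (fun i : Fin n => i.val < m), c < lam i) ∧
      ∀ i ∉ univ.filter (fun i : Fin n => i.val < m), lam i ≤ c :=
  exists_threshold_of_forall_lt fun i hi j hj => by
    simp only [mem_filter, mem_univ, true_and, not_lt] at hi hj
    exact hgap i j (by omega) (by omega)

theorem sum_sum_filter_val_lt_eq_card (hk : k ≤ n) (hrow : ∀ j, ∑ i, d j i = 1) (hm : m ≤ k) :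
    ∑ i, ∑ j : Fin k with j.val < m, d j i = #(univ.filter fun i : Fin n => i.val < m) := by
  rw [sum_comm]
  simp [hrow, Fin.card_filter_val_lt, hm, hm.trans hk]

end Prefix

theorem eq_ite_of_sum_mul_sum_mul_eq {n k : ℕ} (hk : k ≤ n) {lam : Fin n → ℝ}
    (hgap : ∀ i j : Fin n, (i : ℕ) < (j : ℕ) → (i : ℕ) < k → lam j < lam i)
    {d : Fin k → Fin n → ℝ} (hd0 : ∀ j i, 0 ≤ d j i) (hrow : ∀ j, ∑ i, d j i = 1)
    (hcol : ∀ i, ∑ j, d j i ≤ 1) {w : Fin k → ℝ} (hw : StrictAnti w) (hw0 : ∀ j, 0 < w j)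
    (h : ∑ j, w j * ∑ i, lam i * d j i = ∑ j, w j * lam (Fin.castLE hk j))
    (j : Fin k) (i : Fin n) :
    d j i = if i = Fin.castLE hk j then 1 else 0 := by
  set T : ℕ → Finset (Fin n) := fun m => univ.filter fun i => i.val < m
  set s : ℕ → Fin n → ℝ := fun m i => ∑ j : Fin k with j.val < m, d j i
  have hs0 (m : ℕ) (i : Fin n) : 0 ≤ s m i := sum_nonneg fun j _ => hd0 j i
  have hs1 (m : ℕ) (i : Fin n) : s m i ≤ 1 :=
    (sum_le_sum_of_subset_of_nonneg (filter_subset _ _) fun j _ _ => hd0 j i).trans (hcol i)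
  have hpartial (m : ℕ) (hm : m ≤ k) :
      ∑ j : Fin k with j.val < m, (∑ i, lam i * d j i - lam (Fin.castLE hk j)) =
        ∑ i, lam i * s m i - ∑ i ∈ T m, lam i := by
    rw [sum_sub_distrib, Fin.sum_filter_val_lt_castLE hk hm, sum_comm]
    simp [s, T, mul_sum]
  have hbound (m : ℕ) (hm : m ≤ k) : ∑ i, lam i * s m i ≤ ∑ i ∈ T m, lam i := by
    obtain ⟨c, hcT, hcTc⟩ := exists_threshold_filter_val_lt hgap hm
    exact sum_mul_le_sum_of_le_of_le (T m) (fun i hi => (hcT i hi).le) hcTc (hs0 m) (hs1 m)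
      (sum_sum_filter_val_lt_eq_card hk hrow hm)
  have hprefix (m : ℕ) (hm : m ≤ k) (i : Fin n) : s m i = if i ∈ T m then 1 else 0 := by
    obtain ⟨c, hcT, hcTc⟩ := exists_threshold_filter_val_lt hgap hm
    refine eq_ite_of_sum_mul_eq_sum (T m) hcT hcTc (hs0 m) (hs1 m)
      (sum_sum_filter_val_lt_eq_card hk hrow hm) ?_ i
    have := Fin.sum_filter_val_lt_eq_zero_of_sum_mul_eq_zero hw hw0
      (fun m hm => (hpartial m hm).symm ▸ sub_nonpos.2 (hbound m hm))
      (by simp only [mul_sub, sum_sub_distrib, h, sub_self]) hm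
    linarith [hpartial m hm]
  have hsucc : s (j + 1) i = d j i + s j i := Fin.sum_filter_val_lt_succ (d · i) j
  rw [hprefix _ j.isLt i, hprefix _ j.isLt.le i] at hsucc
  simp only [T, mem_filter, mem_univ, true_and] at hsucc
  simp only [Fin.ext_iff, Fin.val_castLE]
  split_ifs at hsucc ⊢ <;> first | omega | linarith

theorem stmt14_general {n k : ℕ} (hk : k ≤ n)
    (A : Matrix (Fin n) (Fin n) ℝ)
    (u : Fin n → (Fin n → ℝ)) (lam : Fin n → ℝ)
    (hu : ∀ i j, u i ⬝ᵥ u j = if i = j then (1 : ℝ) else 0)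
    (heig : ∀ i, A *ᵥ u i = lam i • u i)
    -- the top k eigenvalues are simple and separated from the rest
    (hgap : ∀ i j : Fin n, (i : ℕ) < (j : ℕ) → (i : ℕ) < k → lam j < lam i)
    (p : Fin k → (Fin n → ℝ))
    (hp : ∀ i j, p i ⬝ᵥ p j = if i = j then (1 : ℝ) else 0)
    (w : Fin k → ℝ)
    (hw : ∀ i j : Fin k, i < j → w j < w i) (hw0 : ∀ j, 0 < w j)
    (htr : (A * ∑ j : Fin k, w j • Matrix.vecMulVec (p j) (p j)).trace =
      ∑ j : Fin k, w j * lam (Fin.castLE hk j)) :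
    ∀ j : Fin k, p j = u (Fin.castLE hk j) ∨ p j = -(u (Fin.castLE hk j)) := by
  have hrow (j : Fin k) : ∑ i, (p j ⬝ᵥ u i) ^ 2 = 1 := by
    rw [← dotProduct_self_eq_sum_sq hu, hp, if_pos rfl]
  have hcol (i : Fin n) : ∑ j, (p j ⬝ᵥ u i) ^ 2 ≤ 1 := by
    simpa only [dotProduct_comm (p _), hu, if_true] using sum_sq_dotProduct_le hp (u i)
  rw [trace_mul_sum_smul_vecMulVec] at htr
  simp only [dotProduct_mulVec_eq_sum_mul_sq hu heig] at htr
  exact fun j => eq_or_eq_neg_of_sq_dotProduct_eq_ite hu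
    (eq_ite_of_sum_mul_sum_mul_eq hk hgap (fun _ _ => sq_nonneg _) hrow hcol hw hw0 htr j)

theorem stmt14 {n k : ℕ} (hk : k ≤ n)
    (A : Matrix (Fin n) (Fin n) ℝ) (hA : A.IsSymm)
    (u : Fin n → (Fin n → ℝ)) (lam : Fin n → ℝ)
    (hu : ∀ i j, u i ⬝ᵥ u j = if i = j then (1 : ℝ) else 0)
    (heig : ∀ i, A *ᵥ u i = lam i • u i)
    (hlam : Antitone lam)
    -- the top k eigenvalues are simple and separated from the rest
    (hgap : ∀ i j : Fin n, (i : ℕ) < (j : ℕ) → (i : ℕ) < k → lam j < lam i)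
    (p : Fin k → (Fin n → ℝ))
    (hp : ∀ i j, p i ⬝ᵥ p j = if i = j then (1 : ℝ) else 0)
    (w : Fin k → ℝ)
    (hw : ∀ i j : Fin k, i < j → w j < w i) (hw0 : ∀ j, 0 < w j)
    (htr : (A * ∑ j : Fin k, w j • Matrix.vecMulVec (p j) (p j)).trace =
      ∑ j : Fin k, w j * lam (Fin.castLE hk j)) :
    ∀ j : Fin k, p j = u (Fin.castLE hk j) ∨ p j = -(u (Fin.castLE hk j)) :=
  stmt14_general hk A u lam hu heig hgap p hp w hw hw0 htr
end

section
/- Let S ∈ ℝ^{n×m} and define J(P) = Σ_{ℓ=1}^k ‖P_ℓᵀS‖_F². The map J on St(n,k) is invariant under right multiplication of each column by ±1 (i.e., J(PD) = J(P) for any diagonal sign matrix D), but J is NOT in general invariant under an arbitrary orthogonal change of basis Q ∈ O(k): there exist S, P, Q with J(PQ) ≠ J(P). In contrast, the unnested objective ‖PPᵀS‖_F² satisfies ‖(PQ)(PQ)ᵀS‖_F² = ‖PPᵀS‖_F² for all orthogonal Q. -/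
open Matrix BigOperators

/-! The nested objective weights the `j`-th column by the number `k - j` of leading blocks
`P_ℓ` containing it; an orthogonal `Q` that mixes columns of different weights changes `J`,
while a sign flip only changes the sign of a row of `Pᵀ S`. The unnested objective depends
on `P` only through the projector `P Pᵀ`, which `Q` does not change. -/

theorem J_eq_sum_mul {n m k : ℕ} (S : Matrix (Fin n) (Fin m) ℝ) (P : Matrix (Fin n) (Fin k) ℝ) :
    _root_.J S P = ∑ j : Fin k, ((k - j : ℕ) : ℝ) * ∑ c : Fin m, ((Pᵀ * S) j c) ^ 2 := by
  rw [_root_.J, Finset.sum_comm]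
  refine Finset.sum_congr rfl fun j _ => ?_
  rw [Finset.sum_ite, Finset.sum_const_zero, add_zero, Finset.sum_const, nsmul_eq_mul,
    Finset.filter_le_eq_Ici, Fin.card_Ici]

theorem J_mul_diagonal {n m k : ℕ} (S : Matrix (Fin n) (Fin m) ℝ) (P : Matrix (Fin n) (Fin k) ℝ)
    {D : Fin k → ℝ} (hD : ∀ j, D j ^ 2 = 1) : _root_.J S (P * diagonal D) = _root_.J S P := by
  simp only [_root_.J, transpose_mul, diagonal_transpose, Matrix.mul_assoc, diagonal_mul, mul_pow,
    hD, one_mul]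

theorem exists_J_mul_orthogonal_ne :
    ∃ (S : Matrix (Fin 2) (Fin 1) ℝ) (P Q : Matrix (Fin 2) (Fin 2) ℝ),
      Pᵀ * P = 1 ∧ Qᵀ * Q = 1 ∧ Q * Qᵀ = 1 ∧ _root_.J S (P * Q) ≠ _root_.J S P := by
  have hQ : !![(0 : ℝ), 1; 1, 0]ᵀ * !![0, 1; 1, 0] = 1 := by
    ext i j; fin_cases i <;> fin_cases j <;> simp [Matrix.mul_apply]
  have hQ' : !![(0 : ℝ), 1; 1, 0] * !![0, 1; 1, 0]ᵀ = 1 := by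
    ext i j; fin_cases i <;> fin_cases j <;> simp [Matrix.mul_apply]
  refine ⟨!![1; 0], 1, !![0, 1; 1, 0], by simp, hQ, hQ', ?_⟩
  -- the swap moves the unit vector `S` from the column of weight 2 to the one of weight 1
  simp [J_eq_sum_mul, Fin.sum_univ_two, Matrix.mul_apply]

theorem mul_mul_transpose_mul_eq {R l m n : Type*} [CommSemiring R] [Fintype m] [Fintype n]
    [DecidableEq m] (P : Matrix l m R) {Q : Matrix m n R} (hQ : Q * Qᵀ = 1) :
    P * Q * (P * Q)ᵀ = P * Pᵀ := by
  rw [transpose_mul, Matrix.mul_assoc, ← Matrix.mul_assoc Q, hQ, Matrix.one_mul]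

theorem stmt16 :
    -- J is invariant under column-wise sign flips
    (∀ (n m k : ℕ) (S : Matrix (Fin n) (Fin m) ℝ) (P : Matrix (Fin n) (Fin k) ℝ)
        (D : Fin k → ℝ), Pᵀ * P = 1 → (∀ j, D j = 1 ∨ D j = -1) →
        J S (P * Matrix.diagonal D) = J S P) ∧
    -- J is NOT invariant under arbitrary orthogonal changes of basis
    (∃ (S : Matrix (Fin 2) (Fin 1) ℝ) (P Q : Matrix (Fin 2) (Fin 2) ℝ),
        Pᵀ * P = 1 ∧ Qᵀ * Q = 1 ∧ Q * Qᵀ = 1 ∧ J S (P * Q) ≠ J S P) ∧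
    -- the unnested objective ‖PPᵀS‖_F² IS invariant under orthogonal Q
    (∀ (n m k : ℕ) (S : Matrix (Fin n) (Fin m) ℝ) (P : Matrix (Fin n) (Fin k) ℝ)
        (Q : Matrix (Fin k) (Fin k) ℝ), Pᵀ * P = 1 → Qᵀ * Q = 1 → Q * Qᵀ = 1 →
        frobSq ((P * Q) * (P * Q)ᵀ * S) = frobSq (P * Pᵀ * S)) := by
  refine ⟨?_, exists_J_mul_orthogonal_ne, ?_⟩
  · intro n m k S P D _ hD
    exact J_mul_diagonal S P fun j => by rcases hD j with h | h <;> simp [h]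
  · intro n m k S P Q _ _ hQ
    rw [mul_mul_transpose_mul_eq P hQ]
end
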